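/- For every real number β with 0 ≤ β < 1 there exists a constant C > 0 with the following property: for every complex inner product space H, all vectors a, b ∈ H, and every real number W ≥ 0 satisfying Re⟨a, b⟩ ≥ W − (β + 1)·√W·‖b‖, one has ‖a‖² + ‖b‖² + W ≤ C·‖a + b‖². -/

import Mathlib

/-!
Write `x = ‖a‖`, `y = ‖b‖`, `r = Re⟪a, b⟫`, `w = √W` and `γ = β + 1`, so that the hypothesis
reads `w² - γ w y ≤ r`. Completing the square in `w` gives `r ≥ -(γ²/4) y²`, and AM-GM gives
`w² ≤ 2r + γ² y²`. As `γ² < 4`, the first bound together with Cauchy-Schwarz `r ≥ -x y` bounds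
`y²` by a multiple of `‖a + b‖² = x² + 2r + y²`, and the second then gives
`x² + y² + w² ≤ ‖a + b‖² + γ² y²`.
-/

open RCLike

theorem neg_sq_div_four_mul_sq_le_of_sq_sub_mul_le {w y γ r : ℝ} (h : w ^ 2 - γ * w * y ≤ r) :
    -(γ ^ 2 / 4 * y ^ 2) ≤ r := by
  nlinarith [sq_nonneg (w - γ * y / 2)]

theorem sq_le_two_mul_add_of_sq_sub_mul_le {w y γ r : ℝ} (h : w ^ 2 - γ * w * y ≤ r) :
    w ^ 2 ≤ 2 * r + γ ^ 2 * y ^ 2 := by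
  nlinarith [sq_nonneg (w - γ * y)]

section InnerProductSpace

variable {𝕜 E : Type*} [RCLike 𝕜] [NormedAddCommGroup E] [InnerProductSpace 𝕜 E]

theorem neg_mul_norm_le_re_inner (a b : E) : -(‖a‖ * ‖b‖) ≤ re (inner 𝕜 a b) :=
  neg_le_of_abs_le ((abs_re_le_norm _).trans (norm_inner_le_norm a b))

/-- `‖a + b‖² ≥ (‖a‖ - θ‖b‖)² + (1 - θ)²‖b‖²`, by the convex combination of
`Re⟪a, b⟫ ≥ -‖a‖‖b‖` and `Re⟪a, b⟫ ≥ -θ‖b‖²` with weights `θ` and `1 - θ`. -/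
theorem one_sub_sq_mul_norm_sq_le_norm_add_sq {a b : E} {θ : ℝ} (hθ0 : 0 ≤ θ) (hθ1 : θ ≤ 1)
    (h : -(θ * ‖b‖ ^ 2) ≤ re (inner 𝕜 a b)) :
    (1 - θ) ^ 2 * ‖b‖ ^ 2 ≤ ‖a + b‖ ^ 2 := by
  have hcs := mul_le_mul_of_nonneg_left (neg_mul_norm_le_re_inner (𝕜 := 𝕜) a b) hθ0
  have h' := mul_le_mul_of_nonneg_left h (sub_nonneg.mpr hθ1)
  rw [@norm_add_sq 𝕜]
  nlinarith [sq_nonneg (‖a‖ - θ * ‖b‖)]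

end InnerProductSpace

/-- Abstract analytic core of Lemma 4.1: for every `0 ≤ β < 1` there is a constant
`C > 0` such that for every complex inner product space `H`, all `a b : H`, and every
real `W ≥ 0` with `Re⟪a, b⟫ ≥ W - (β + 1) √W ‖b‖`, one has
`‖a‖² + ‖b‖² + W ≤ C ‖a + b‖²`. -/
theorem abstract_coercive_estimate (β : ℝ) (hβ0 : 0 ≤ β) (hβ1 : β < 1) :
    ∃ C : ℝ, 0 < C ∧
      ∀ (H : Type) [NormedAddCommGroup H] [InnerProductSpace ℂ H]
        (a b : H) (W : ℝ), 0 ≤ W →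
        W - (β + 1) * Real.sqrt W * ‖b‖ ≤ (inner ℂ a b : ℂ).re →
        ‖a‖ ^ 2 + ‖b‖ ^ 2 + W ≤ C * ‖a + b‖ ^ 2 := by
  set γ := β + 1
  have hγ : γ ^ 2 / 4 < 1 := by nlinarith
  refine ⟨1 + γ ^ 2 / (1 - γ ^ 2 / 4) ^ 2, by positivity, ?_⟩
  intro H _ _ a b W hW h
  replace h : √W ^ 2 - γ * √W * ‖b‖ ≤ re (inner ℂ a b) := by rwa [Real.sq_sqrt hW]
  rw [← Real.sq_sqrt hW]
  have hb : (1 - γ ^ 2 / 4) ^ 2 * ‖b‖ ^ 2 ≤ ‖a + b‖ ^ 2 :=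
    one_sub_sq_mul_norm_sq_le_norm_add_sq (by positivity) hγ.le
      (neg_sq_div_four_mul_sq_le_of_sq_sub_mul_le h)
  have hW' := sq_le_two_mul_add_of_sq_sub_mul_le h
  calc ‖a‖ ^ 2 + ‖b‖ ^ 2 + √W ^ 2 ≤ ‖a + b‖ ^ 2 + γ ^ 2 * ‖b‖ ^ 2 := by
        rw [@norm_add_sq ℂ]; linarith
    _ ≤ ‖a + b‖ ^ 2 + γ ^ 2 * (‖a + b‖ ^ 2 / (1 - γ ^ 2 / 4) ^ 2) := by
        gcongr
        rw [le_div_iff₀ (by nlinarith)]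
        linarith
    _ = (1 + γ ^ 2 / (1 - γ ^ 2 / 4) ^ 2) * ‖a + b‖ ^ 2 := by ring
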